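/- arXiv:2511.15050 — 5 statements merged into one kernel-verified Lean document; each statement's English description precedes it below -/
import Mathlib

section
/- Let σ ≥ 1, ρ₀ > 0, and for ρ with ρ₀/2 ≤ ρ ≤ ρ₀ define L_{ρ,m} = ρ^{m+1}(m+1)^{6+2σ}/(m!)^σ. Then there is a constant C > 0 (depending only on σ and ρ₀) such that for all m ∈ ℤ₊ and all k with 0 ≤ k ≤ ⌊m/2⌋, one has binom(m,k) · L_{ρ,m}/(L_{ρ,k} · L_{ρ,m-k}) ≤ C/(k+1)^6. -/
/-- `L_{ρ,m} = ρ^{m+1} (m+1)^{6+2σ} / (m!)^σ`. -/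
noncomputable def Lr (σ ρ : ℝ) (m : ℕ) : ℝ :=
  ρ ^ (m + 1) * ((m : ℝ) + 1) ^ (6 + 2 * σ) / (Nat.factorial m : ℝ) ^ σ

theorem binom_L_bound_low (σ ρ₀ : ℝ) (hσ : 1 ≤ σ) (hρ₀ : 0 < ρ₀) :
    ∃ C > 0, ∀ ρ : ℝ, ρ₀ / 2 ≤ ρ → ρ ≤ ρ₀ →
      ∀ m k : ℕ, k ≤ m / 2 →
        (Nat.choose m k : ℝ) * Lr σ ρ m / (Lr σ ρ k * Lr σ ρ (m - k)) ≤
          C / ((k : ℝ) + 1) ^ 6 := by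
  have hs : (0:ℝ) ≤ 6 + 2 * σ := by linarith
  refine ⟨(2:ℝ) ^ (6 + 2*σ) * (2/ρ₀), by positivity, ?_⟩
  intro ρ hρl hρu m k hk
  have hρ : 0 < ρ := lt_of_lt_of_le (by positivity) hρl
  obtain ⟨j, rfl⟩ : ∃ j, m = k + j := ⟨m - k, by omega⟩
  have hkj : k ≤ j := by
    have := (Nat.le_div_iff_mul_le (by norm_num)).1 hk
    omega
  rw [Nat.add_sub_cancel_left]
  -- positivity facts
  have hfk : (0:ℝ) < (Nat.factorial k : ℝ) ^ σ :=
    Real.rpow_pos_of_pos (by exact_mod_cast k.factorial_pos) σ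
  have hfj : (0:ℝ) < (Nat.factorial j : ℝ) ^ σ :=
    Real.rpow_pos_of_pos (by exact_mod_cast j.factorial_pos) σ
  have hfm : (0:ℝ) < (Nat.factorial (k+j) : ℝ) ^ σ :=
    Real.rpow_pos_of_pos (by exact_mod_cast (k+j).factorial_pos) σ
  have hpk : (0:ℝ) < ((k:ℝ) + 1) ^ (6 + 2*σ) :=
    Real.rpow_pos_of_pos (by positivity) _
  have hpj : (0:ℝ) < ((j:ℝ) + 1) ^ (6 + 2*σ) :=
    Real.rpow_pos_of_pos (by positivity) _
  have hpm : (0:ℝ) < ((k:ℝ) + (j:ℝ) + 1) ^ (6 + 2*σ) :=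
    Real.rpow_pos_of_pos (by positivity) _
  -- key identity
  have key : (Nat.choose (k+j) k : ℝ) * Lr σ ρ (k+j) / (Lr σ ρ k * Lr σ ρ j) =
      ((Nat.choose (k+j) k : ℝ) * (Nat.factorial k : ℝ) ^ σ * (Nat.factorial j : ℝ) ^ σ
          / (Nat.factorial (k+j) : ℝ) ^ σ)
        * (1/ρ)
        * (((k:ℝ) + (j:ℝ) + 1) ^ (6 + 2*σ)
            / (((k:ℝ) + 1) ^ (6 + 2*σ) * ((j:ℝ) + 1) ^ (6 + 2*σ))) := by
    unfold Lr
    push_cast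
    field_simp
    ring
  rw [key]
  -- Bound 1 : the factorial factor is ≤ 1
  have hr1 : ((Nat.factorial k : ℝ) * (Nat.factorial j : ℝ)) / (Nat.factorial (k+j) : ℝ) ≤ 1 := by
    rw [div_le_one (by exact_mod_cast (k+j).factorial_pos)]
    exact_mod_cast Nat.le_of_dvd (k+j).factorial_pos
      (Nat.factorial_mul_factorial_dvd_factorial_add k j)
  have hrpos : (0:ℝ) < ((Nat.factorial k : ℝ) * (Nat.factorial j : ℝ)) / (Nat.factorial (k+j) : ℝ) := by
    have h1 : (0:ℝ) < (Nat.factorial k : ℝ) := by exact_mod_cast k.factorial_pos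
    have h2 : (0:ℝ) < (Nat.factorial j : ℝ) := by exact_mod_cast j.factorial_pos
    have h3 : (0:ℝ) < (Nat.factorial (k+j) : ℝ) := by exact_mod_cast (k+j).factorial_pos
    positivity
  have hX : (Nat.choose (k+j) k : ℝ) * (Nat.factorial k : ℝ) ^ σ * (Nat.factorial j : ℝ) ^ σ
      / (Nat.factorial (k+j) : ℝ) ^ σ ≤ 1 := by
    have hσr : (((Nat.factorial k : ℝ) * (Nat.factorial j : ℝ)) / (Nat.factorial (k+j) : ℝ)) ^ σ
        ≤ ((Nat.factorial k : ℝ) * (Nat.factorial j : ℝ)) / (Nat.factorial (k+j) : ℝ) := by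
      calc (((Nat.factorial k : ℝ) * (Nat.factorial j : ℝ)) / (Nat.factorial (k+j) : ℝ)) ^ σ
          ≤ (((Nat.factorial k : ℝ) * (Nat.factorial j : ℝ)) / (Nat.factorial (k+j) : ℝ)) ^ (1:ℝ) :=
            Real.rpow_le_rpow_of_exponent_ge hrpos hr1 hσ
        _ = _ := Real.rpow_one _
    have hrw : ((((Nat.factorial k : ℝ)) * (Nat.factorial j : ℝ)) / (Nat.factorial (k+j) : ℝ)) ^ σ
        = (Nat.factorial k : ℝ) ^ σ * (Nat.factorial j : ℝ) ^ σ / (Nat.factorial (k+j) : ℝ) ^ σ := by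
      rw [Real.div_rpow (by positivity) (by positivity), Real.mul_rpow (by positivity) (by positivity)]
    have hc : (0:ℝ) ≤ (Nat.choose (k+j) k : ℝ) := by positivity
    have hchoose : (Nat.choose (k+j) k : ℝ) *
        (((Nat.factorial k : ℝ) * (Nat.factorial j : ℝ)) / (Nat.factorial (k+j) : ℝ)) = 1 := by
      have hfact : ((Nat.choose (k+j) k : ℝ)) * (Nat.factorial k : ℝ) * (Nat.factorial j : ℝ)
          = (Nat.factorial (k+j) : ℝ) := by
        rw [show (k+j).choose k = (k+j).choose j by
          rw [← Nat.choose_symm (Nat.le_add_right k j), Nat.add_sub_cancel_left]]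
        exact_mod_cast Nat.add_choose_mul_factorial_mul_factorial k j
      have h3 : ((Nat.factorial (k+j) : ℝ)) ≠ 0 := by
        exact_mod_cast (k+j).factorial_pos.ne'
      field_simp
      linear_combination hfact
    calc (Nat.choose (k+j) k : ℝ) * (Nat.factorial k : ℝ) ^ σ * (Nat.factorial j : ℝ) ^ σ
          / (Nat.factorial (k+j) : ℝ) ^ σ
        = (Nat.choose (k+j) k : ℝ) *
            ((((Nat.factorial k : ℝ)) * (Nat.factorial j : ℝ)) / (Nat.factorial (k+j) : ℝ)) ^ σ := by
          rw [hrw]; ring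
      _ ≤ (Nat.choose (k+j) k : ℝ) *
            (((Nat.factorial k : ℝ) * (Nat.factorial j : ℝ)) / (Nat.factorial (k+j) : ℝ)) :=
          mul_le_mul_of_nonneg_left hσr hc
      _ = 1 := hchoose
  -- Bound 2 : ρ factor
  have hY : (1:ℝ)/ρ ≤ 2/ρ₀ := by
    rw [div_le_div_iff₀ hρ hρ₀]
    linarith
  -- Bound 3 : polynomial factor
  have hZ : ((k:ℝ) + (j:ℝ) + 1) ^ (6 + 2*σ)
      / (((k:ℝ) + 1) ^ (6 + 2*σ) * ((j:ℝ) + 1) ^ (6 + 2*σ))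
      ≤ (2:ℝ) ^ (6 + 2*σ) / ((k:ℝ) + 1) ^ 6 := by
    have hnum : ((k:ℝ) + (j:ℝ) + 1) ^ (6 + 2*σ) ≤ (2:ℝ) ^ (6 + 2*σ) * ((j:ℝ) + 1) ^ (6 + 2*σ) := by
      rw [← Real.mul_rpow (by norm_num) (by positivity)]
      apply Real.rpow_le_rpow (by positivity) _ hs
      have : (k:ℝ) ≤ (j:ℝ) := by exact_mod_cast hkj
      linarith
    have hden : ((k:ℝ) + 1) ^ 6 * ((j:ℝ) + 1) ^ (6 + 2*σ)
        ≤ ((k:ℝ) + 1) ^ (6 + 2*σ) * ((j:ℝ) + 1) ^ (6 + 2*σ) := by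
      apply mul_le_mul_of_nonneg_right _ (le_of_lt hpj)
      calc ((k:ℝ) + 1) ^ 6 = ((k:ℝ) + 1) ^ ((6:ℕ):ℝ) := (Real.rpow_natCast _ 6).symm
        _ ≤ ((k:ℝ) + 1) ^ (6 + 2*σ) := by
            apply Real.rpow_le_rpow_of_exponent_le (by simp)
            push_cast; linarith
    calc ((k:ℝ) + (j:ℝ) + 1) ^ (6 + 2*σ)
          / (((k:ℝ) + 1) ^ (6 + 2*σ) * ((j:ℝ) + 1) ^ (6 + 2*σ))
        ≤ ((2:ℝ) ^ (6 + 2*σ) * ((j:ℝ) + 1) ^ (6 + 2*σ))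
          / (((k:ℝ) + 1) ^ 6 * ((j:ℝ) + 1) ^ (6 + 2*σ)) :=
          div_le_div₀ (by positivity) hnum (by positivity) hden
      _ = (2:ℝ) ^ (6 + 2*σ) / ((k:ℝ) + 1) ^ 6 :=
          mul_div_mul_right _ _ (ne_of_gt hpj)
  -- combine
  have h1 : (0:ℝ) ≤ (Nat.choose (k+j) k : ℝ) * (Nat.factorial k : ℝ) ^ σ * (Nat.factorial j : ℝ) ^ σ
      / (Nat.factorial (k+j) : ℝ) ^ σ := by positivity
  calc ((Nat.choose (k+j) k : ℝ) * (Nat.factorial k : ℝ) ^ σ * (Nat.factorial j : ℝ) ^ σ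
          / (Nat.factorial (k+j) : ℝ) ^ σ) * (1/ρ)
        * (((k:ℝ) + (j:ℝ) + 1) ^ (6 + 2*σ)
            / (((k:ℝ) + 1) ^ (6 + 2*σ) * ((j:ℝ) + 1) ^ (6 + 2*σ)))
      ≤ 1 * (2/ρ₀) * ((2:ℝ) ^ (6 + 2*σ) / ((k:ℝ) + 1) ^ 6) := by
        apply mul_le_mul _ hZ (by positivity) (by positivity)
        exact mul_le_mul hX hY (by positivity) (by norm_num)
    _ = (2:ℝ) ^ (6 + 2*σ) * (2/ρ₀) / ((k:ℝ) + 1) ^ 6 := by ring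
end

section
/- Let σ ≥ 1, ρ₀ > 0, and for ρ with ρ₀/2 ≤ ρ ≤ ρ₀ define L_{ρ,m} = ρ^{m+1}(m+1)^{6+2σ}/(m!)^σ. Then there is a constant C > 0 such that for all m ∈ ℤ₊ and all k with ⌊m/2⌋+1 ≤ k ≤ m, one has binom(m,k) · L_{ρ,m}/(L_{ρ,k} · L_{ρ,m-k}) ≤ C/(m-k+1)^6. -/
open Nat

theorem Nat.choose_mul_rpow_factorial_mul_rpow_factorial_le {σ : ℝ} (hσ : 1 ≤ σ) (k n : ℕ) :
    ((k + n).choose k : ℝ) * ((k ! : ℝ) ^ σ * (n ! : ℝ) ^ σ) ≤ ((k + n)! : ℝ) ^ σ := by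
  have hchoose : (1 : ℝ) ≤ (k + n).choose k := by
    exact_mod_cast Nat.choose_pos (Nat.le_add_right k n)
  have hfactorial : ((k + n).choose k : ℝ) * (k ! * n !) = (k + n)! := by
    rw [← mul_assoc]
    have := Nat.choose_mul_factorial_mul_factorial (Nat.le_add_right k n)
    rw [Nat.add_sub_cancel_left] at this
    exact_mod_cast this
  calc ((k + n).choose k : ℝ) * ((k ! : ℝ) ^ σ * (n ! : ℝ) ^ σ)
      ≤ ((k + n).choose k : ℝ) ^ σ * ((k ! : ℝ) * n !) ^ σ := by
        rw [Real.mul_rpow (by positivity) (by positivity)]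
        gcongr
        exact Real.self_le_rpow_of_one_le hchoose hσ
    _ = ((k + n)! : ℝ) ^ σ := by
        rw [← Real.mul_rpow (by positivity) (by positivity), hfactorial]

theorem choose_mul_Lr_div_Lr_mul_Lr {ρ : ℝ} (hρ : 0 < ρ) (σ : ℝ) (k n : ℕ) :
    ((k + n).choose k : ℝ) * Lr σ ρ (k + n) / (Lr σ ρ k * Lr σ ρ n) =
      ((k + n).choose k : ℝ) * ((k ! : ℝ) ^ σ * (n ! : ℝ) ^ σ) / ((k + n)! : ℝ) ^ σ *
        ((((k + n : ℕ) : ℝ) + 1) ^ (6 + 2 * σ) /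
          (((k : ℝ) + 1) ^ (6 + 2 * σ) * ((n : ℝ) + 1) ^ (6 + 2 * σ))) / ρ := by
  unfold Lr
  field_simp
  ring

theorem add_one_rpow_div_le {a : ℝ} (ha : 6 ≤ a) {k n : ℕ} (hnk : n ≤ k + 1) :
    (((k + n : ℕ) : ℝ) + 1) ^ a / (((k : ℝ) + 1) ^ a * ((n : ℝ) + 1) ^ a) ≤
      2 ^ a / ((n : ℝ) + 1) ^ 6 := by
  have hsum : ((k + n : ℕ) : ℝ) + 1 ≤ 2 * ((k : ℝ) + 1) := by
    have : k + n + 1 ≤ 2 * (k + 1) := by omega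
    exact_mod_cast this
  have hsix : ((n : ℝ) + 1) ^ (6 : ℝ) ≤ ((n : ℝ) + 1) ^ a :=
    Real.rpow_le_rpow_of_exponent_le (by linarith [n.cast_nonneg (α := ℝ)]) ha
  rw [← Real.rpow_natCast, div_le_div_iff₀ (by positivity) (by positivity)]
  calc (((k + n : ℕ) : ℝ) + 1) ^ a * ((n : ℝ) + 1) ^ ((6 : ℕ) : ℝ)
      ≤ (2 * ((k : ℝ) + 1)) ^ a * ((n : ℝ) + 1) ^ a := by
        rw [Nat.cast_ofNat]
        gcongr
    _ = 2 ^ a * (((k : ℝ) + 1) ^ a * ((n : ℝ) + 1) ^ a) := by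
        rw [Real.mul_rpow (by norm_num) (by positivity)]
        ring

theorem binom_L_bound_high (σ ρ₀ : ℝ) (hσ : 1 ≤ σ) (hρ₀ : 0 < ρ₀) :
    ∃ C > 0, ∀ ρ : ℝ, ρ₀ / 2 ≤ ρ → ρ ≤ ρ₀ →
      ∀ m k : ℕ, m / 2 + 1 ≤ k → k ≤ m →
        (Nat.choose m k : ℝ) * Lr σ ρ m / (Lr σ ρ k * Lr σ ρ (m - k)) ≤
          C / (((m - k : ℕ) : ℝ) + 1) ^ 6 := by
  refine ⟨2 ^ (6 + 2 * σ) * 2 / ρ₀, by positivity, ?_⟩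
  intro ρ hρ _ m k hk hkm
  obtain ⟨n, rfl⟩ := Nat.exists_eq_add_of_le hkm
  have hρpos : 0 < ρ := by linarith
  rw [Nat.add_sub_cancel_left, choose_mul_Lr_div_Lr_mul_Lr hρpos]
  calc _ ≤ 1 * (2 ^ (6 + 2 * σ) / ((n : ℝ) + 1) ^ 6) / (ρ₀ / 2) := by
        gcongr ?_ * ?_ / ?_
        · exact (div_le_one (by positivity)).2
            (Nat.choose_mul_rpow_factorial_mul_rpow_factorial_le hσ k n)
        · exact add_one_rpow_div_le (by linarith) (by omega)
    _ = _ := by field_simp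
end

section
/- Let σ ≥ 1, ρ₀ > 0, and for ρ with ρ₀/2 ≤ ρ ≤ ρ₀ define L_{ρ,m} = ρ^{m+1}(m+1)^{6+2σ}/(m!)^σ. Then there is a constant C > 0 such that for all m ∈ ℤ₊ and all k with 1 ≤ k ≤ ⌊m/2⌋, one has binom(m,k) · L_{ρ,m} / (L_{ρ,k} · L_{ρ,m-k+1} · (m-k+2)^{1/2} · (m+1)^{1/2}) ≤ C/(k+1)^6. -/
open Nat

lemma Nat.succ_le_add_choose {k : ℕ} (hk : 1 ≤ k) (n : ℕ) : n + 1 ≤ (k + n).choose n := by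
  simpa [choose_succ_self_right] using choose_le_choose n (by omega : n + 1 ≤ k + n)

lemma Nat.cast_factorial_mul_factorial_succ_div (k n : ℕ) :
    ((k ! * (n + 1)! : ℕ) : ℝ) / (k + n)! = (n + 1) / (k + n).choose n := by
  have h := add_choose_mul_factorial_mul_factorial k n
  have hc : ((k + n).choose n : ℝ) ≠ 0 := by
    exact_mod_cast (choose_pos (Nat.le_add_left n k)).ne'
  rw [div_eq_div_iff (by positivity) hc, ← h, factorial_succ]
  push_cast
  ring

lemma mul_div_rpow_le {a c σ : ℝ} (ha : 0 ≤ a) (hac : a ≤ c) (hσ : 1 ≤ σ) :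
    c * (a / c) ^ σ ≤ a := by
  rcases ha.eq_or_lt with rfl | ha
  · simp [Real.zero_rpow (by linarith : σ ≠ 0)]
  have hc : 0 < c := ha.trans_le hac
  calc c * (a / c) ^ σ ≤ c * (a / c) ^ (1 : ℝ) := mul_le_mul_of_nonneg_left
        (Real.rpow_le_rpow_of_exponent_ge (by positivity) (div_le_one_of_le₀ hac hc.le) hσ) hc.le
    _ = a := by rw [Real.rpow_one]; field_simp

lemma add_add_one_div_mul_rpow_le {k n p : ℝ} (hk : 0 ≤ k) (hn : 0 ≤ n) (hkn : k ≤ n + 3) (q : ℕ)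
    (hqp : (q : ℝ) ≤ p) :
    ((k + n + 1) / ((k + 1) * (n + 2))) ^ p ≤ (2 / (k + 1)) ^ q := by
  set x := (k + n + 1) / ((k + 1) * (n + 2))
  have hx : x ≤ 1 := by
    rw [div_le_one (by positivity)]; nlinarith
  have hx2 : x ≤ 2 / (k + 1) := by
    rw [div_le_div_iff₀ (by positivity) (by positivity)]; nlinarith
  calc x ^ p ≤ x ^ (q : ℝ) :=
        Real.rpow_le_rpow_of_exponent_ge' (by positivity) hx (by positivity) hqp
    _ ≤ (2 / (k + 1)) ^ q := by rw [Real.rpow_natCast]; gcongr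

lemma Lr_add_div_Lr_mul_Lr (σ : ℝ) {ρ : ℝ} (hρ : 0 < ρ) (k n : ℕ) :
    Lr σ ρ (k + n) / (Lr σ ρ k * Lr σ ρ (n + 1)) =
      (((k : ℝ) + n + 1) / ((k + 1) * (n + 2))) ^ (6 + 2 * σ) *
        (((k ! * (n + 1)! : ℕ) : ℝ) / (k + n)!) ^ σ / ρ ^ 2 := by
  simp only [Lr]
  rw [Real.div_rpow (by positivity) (by positivity), Real.mul_rpow (by positivity) (by positivity),
    Real.div_rpow (by positivity) (by positivity), Nat.cast_mul,
    Real.mul_rpow (by positivity) (by positivity)]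
  have hpow : ρ ^ (k + 1) * ρ ^ (n + 1 + 1) = ρ ^ (k + n + 1) * ρ ^ 2 := by
    rw [← pow_add, ← pow_add]; ring_nf
  push_cast
  rw [show (n : ℝ) + 1 + 1 = n + 2 by ring]
  field_simp
  rw [hpow]

theorem binom_L_shift_bound_low (σ ρ₀ : ℝ) (hσ : 1 ≤ σ) (hρ₀ : 0 < ρ₀) :
    ∃ C > 0, ∀ ρ : ℝ, ρ₀ / 2 ≤ ρ → ρ ≤ ρ₀ →
      ∀ m k : ℕ, 1 ≤ k → k ≤ m / 2 →
        (Nat.choose m k : ℝ) * Lr σ ρ m /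
            (Lr σ ρ k * Lr σ ρ (m - k + 1) * Real.sqrt (((m - k : ℕ) : ℝ) + 2) *
              Real.sqrt ((m : ℝ) + 1)) ≤
          C / ((k : ℝ) + 1) ^ 6 := by
  refine ⟨256 / ρ₀ ^ 2, by positivity, fun ρ hρ₀ρ _ m k hk hkm => ?_⟩
  obtain ⟨n, rfl⟩ := Nat.exists_eq_add_of_le (hkm.trans (Nat.div_le_self _ _))
  have hρ : 0 < ρ := by linarith
  have hchoose : (n : ℝ) + 1 ≤ (k + n).choose n := by exact_mod_cast succ_le_add_choose hk n
  have hfactorials := mul_div_rpow_le (by positivity) hchoose hσ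
  have hpoly := add_add_one_div_mul_rpow_le (k := k) (n := n) (p := 6 + 2 * σ) (by positivity)
    (by positivity) (by norm_cast; omega) 6 (by push_cast; linarith)
  have hρ_sq : 1 / ρ ^ 2 ≤ 4 / ρ₀ ^ 2 := by
    rw [div_le_div_iff₀ (by positivity) (by positivity)]; nlinarith
  have hsqrt : (n : ℝ) + 1 ≤ √((n : ℝ) + 2) * √(((k + n : ℕ) : ℝ) + 1) := by
    rw [← Real.sqrt_mul (by positivity), Real.le_sqrt (by positivity) (by positivity)]
    push_cast; nlinarith
  rw [Nat.add_sub_cancel_left, choose_symm_add, mul_div_assoc, ← div_div, ← div_div,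
    Lr_add_div_Lr_mul_Lr σ hρ, cast_factorial_mul_factorial_succ_div, div_div]
  calc _ = ((k + n).choose n * (((n : ℝ) + 1) / (k + n).choose n) ^ σ) *
          (((k : ℝ) + n + 1) / ((k + 1) * (n + 2))) ^ (6 + 2 * σ) * (1 / ρ ^ 2) /
          (√((n : ℝ) + 2) * √(((k + n : ℕ) : ℝ) + 1)) := by ring
    _ ≤ ((n : ℝ) + 1) * (2 / (k + 1)) ^ 6 * (4 / ρ₀ ^ 2) / ((n : ℝ) + 1) := by gcongr
    _ = 256 / ρ₀ ^ 2 / ((k : ℝ) + 1) ^ 6 := by field_simp; ring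
end

section
/- Let σ ≥ 1, ρ₀ > 0, and for ρ with ρ₀/2 ≤ ρ ≤ ρ₀ define L_{ρ,m} = ρ^{m+1}(m+1)^{6+2σ}/(m!)^σ. Then there is a constant C > 0 such that for all m ∈ ℤ₊ and all k with ⌊m/2⌋+1 ≤ k ≤ m, one has binom(m,k) · L_{ρ,m}/(L_{ρ,k} · L_{ρ,m-k+1}) ≤ C/(m-k+1)^6. -/
set_option maxHeartbeats 1000000 in
theorem binom_L_shift_bound_high (σ ρ₀ : ℝ) (hσ : 1 ≤ σ) (hρ₀ : 0 < ρ₀) :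
    ∃ C > 0, ∀ ρ : ℝ, ρ₀ / 2 ≤ ρ → ρ ≤ ρ₀ →
      ∀ m k : ℕ, m / 2 + 1 ≤ k → k ≤ m →
        (Nat.choose m k : ℝ) * Lr σ ρ m / (Lr σ ρ k * Lr σ ρ (m - k + 1)) ≤
          C / (((m - k : ℕ) : ℝ) + 1) ^ 6 := by
  have hp0 : (0:ℝ) < 6 + 2*σ := by linarith
  refine ⟨(2:ℝ) ^ (6 + 2*σ) * (2/ρ₀)^2, by positivity, ?_⟩
  intro ρ hρl hρu m k hk1 hk2
  have hρ : 0 < ρ := lt_of_lt_of_le (by linarith) hρl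
  obtain ⟨j, rfl⟩ := Nat.exists_eq_add_of_le hk2
  have hsub : k + j - k = j := by omega
  rw [hsub]
  have hjk : j + 1 ≤ k := by omega
  set B : ℝ := (Nat.choose (k+j) k : ℝ) with hBdef
  have hB1 : (1:ℝ) ≤ B := by
    have h := Nat.choose_pos (Nat.le_add_right k j)
    exact Nat.one_le_cast.mpr h
  have hBpos : (0:ℝ) < B := lt_of_lt_of_le one_pos hB1
  have h1 : ((k+j).factorial : ℝ) = B * (k.factorial:ℝ) * (j.factorial:ℝ) := by
    rw [hBdef]
    have := Nat.choose_mul_factorial_mul_factorial (Nat.le_add_right k j)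
    rw [hsub] at this
    exact_mod_cast this.symm
  have h2 : ((j+1).factorial : ℝ) = ((j:ℝ)+1) * (j.factorial:ℝ) := by
    rw [Nat.factorial_succ]; push_cast; ring
  have hFk : (0:ℝ) < (k.factorial:ℝ) := by exact_mod_cast k.factorial_pos
  have hFj : (0:ℝ) < (j.factorial:ℝ) := by exact_mod_cast j.factorial_pos
  have heq : B * Lr σ ρ (k+j) / (Lr σ ρ k * Lr σ ρ (j+1))
      = (B * (((j:ℝ)+1)/B) ^ σ) *
        ((((k:ℝ)+(j:ℝ)+1)/(((k:ℝ)+1)*((j:ℝ)+2))) ^ (6+2*σ)) * (1/ρ^2) := by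
    unfold Lr
    rw [h1, h2]
    push_cast
    rw [Real.mul_rpow (by positivity) (by positivity),
        Real.mul_rpow (by positivity) (by positivity),
        Real.mul_rpow (by positivity) (by positivity),
        Real.div_rpow (by positivity) (by positivity),
        Real.div_rpow (by positivity) (by positivity),
        Real.mul_rpow (by positivity) (by positivity)]
    have hρp : (0:ℝ) < ρ ^ (k+1) := by positivity
    have hBs : (0:ℝ) < B ^ σ := Real.rpow_pos_of_pos hBpos σ
    have hFks : (0:ℝ) < (k.factorial:ℝ) ^ σ := Real.rpow_pos_of_pos hFk σ
    have hFjs : (0:ℝ) < (j.factorial:ℝ) ^ σ := Real.rpow_pos_of_pos hFj σ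
    have hj1s : (0:ℝ) < ((j:ℝ)+1) ^ σ := Real.rpow_pos_of_pos (by positivity) σ
    have hMs : (0:ℝ) < ((k:ℝ)+(j:ℝ)+1) ^ (6+2*σ) := Real.rpow_pos_of_pos (by positivity) _
    have hKs : (0:ℝ) < ((k:ℝ)+1) ^ (6+2*σ) := Real.rpow_pos_of_pos (by positivity) _
    have hJs : (0:ℝ) < ((j:ℝ)+1+1) ^ (6+2*σ) := Real.rpow_pos_of_pos (by positivity) _
    field_simp
    ring
  rw [heq]
  have hjr : (0:ℝ) < (j:ℝ)+1 := by positivity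
  have hF1 : B * (((j:ℝ)+1)/B) ^ σ ≤ ((j:ℝ)+1) ^ σ := by
    rw [Real.div_rpow (by positivity) hBpos.le]
    have hBs : (0:ℝ) < B ^ σ := Real.rpow_pos_of_pos hBpos σ
    have hBB : B ≤ B ^ σ := by
      calc B = B ^ (1:ℝ) := (Real.rpow_one B).symm
      _ ≤ B ^ σ := Real.rpow_le_rpow_of_exponent_le hB1 hσ
    rw [mul_div_assoc', div_le_iff₀ hBs]
    have hj1s : (0:ℝ) < ((j:ℝ)+1) ^ σ := Real.rpow_pos_of_pos hjr σ
    nlinarith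
  have hF2 : (((k:ℝ)+(j:ℝ)+1)/(((k:ℝ)+1)*((j:ℝ)+2))) ^ (6+2*σ)
      ≤ ((2:ℝ)/((j:ℝ)+2)) ^ (6+2*σ) := by
    apply Real.rpow_le_rpow (by positivity) _ hp0.le
    rw [div_le_div_iff₀ (by positivity) (by positivity)]
    have : (j:ℝ)+1 ≤ (k:ℝ) := by exact_mod_cast hjk
    nlinarith
  have hF3 : 1/ρ^2 ≤ (2/ρ₀)^2 := by
    rw [div_pow, div_le_div_iff₀ (by positivity) (by positivity)]
    nlinarith
  calc (B * (((j:ℝ)+1)/B) ^ σ) *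
        ((((k:ℝ)+(j:ℝ)+1)/(((k:ℝ)+1)*((j:ℝ)+2))) ^ (6+2*σ)) * (1/ρ^2)
      ≤ (((j:ℝ)+1) ^ σ) * (((2:ℝ)/((j:ℝ)+2)) ^ (6+2*σ)) * ((2/ρ₀)^2) := by
        exact mul_le_mul (mul_le_mul hF1 hF2 (by positivity) (by positivity)) hF3
          (by positivity) (by positivity)
    _ ≤ ((2:ℝ) ^ (6+2*σ) / ((j:ℝ)+1)^6) * ((2/ρ₀)^2) := by
        gcongr ?_ * _
        rw [Real.div_rpow (by norm_num) (by positivity)]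
        rw [mul_div_assoc', div_le_div_iff₀ (Real.rpow_pos_of_pos (by positivity) _) (by positivity)]
        have e1 : ((j:ℝ)+1)^(6:ℕ) = ((j:ℝ)+1) ^ (6:ℝ) := by
          rw [show (6:ℝ) = ((6:ℕ):ℝ) by norm_num, Real.rpow_natCast]
        have key : ((j:ℝ)+1)^(6:ℕ) * ((j:ℝ)+1) ^ σ ≤ ((j:ℝ)+2) ^ (6+2*σ) := by
          rw [e1, ← Real.rpow_add hjr]
          have s1 : ((j:ℝ)+1) ^ ((6:ℝ) + σ) ≤ ((j:ℝ)+2) ^ ((6:ℝ) + σ) :=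
            Real.rpow_le_rpow (by positivity) (by linarith) (by linarith)
          have s2 : ((j:ℝ)+2) ^ ((6:ℝ) + σ) ≤ ((j:ℝ)+2) ^ (6+2*σ) :=
            Real.rpow_le_rpow_of_exponent_le (by linarith) (by linarith)
          linarith
        have h2p : (0:ℝ) ≤ (2:ℝ) ^ (6+2*σ) := (Real.rpow_pos_of_pos two_pos _).le
        have hmul := mul_le_mul_of_nonneg_left key h2p
        linarith [hmul]
    _ ≤ ((2:ℝ) ^ (6 + 2*σ) * (2/ρ₀)^2) / ((j:ℝ)+1)^6 := by
        rw [div_mul_eq_mul_div]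
end

section
/- Let σ ≥ 1 and 1 ≤ δ ≤ σ be real numbers, and let j, k ∈ ℤ₊, β, γ ∈ ℤ₊³ with (γ,k) ≤ (β,j) componentwise. Then the combinatorial bound holds: [(|β|+j)!/((|γ|+k)!(|β|+j-|γ|-k)!)] · [(k+γ₁+γ₃)!]^{σ-δ} · [(k+|γ|)!]^δ · [(j-k+β₁-γ₁+β₃-γ₃+1)!]^{σ-δ} · [(j-k+|β|-|γ|+1)!]^δ ≤ C · [(j+β₁+β₃+1)!]^{σ-δ} · [(|β|+j+1)!]^δ for a constant C depending only on σ and δ. -/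
theorem combinatorial_factorial_bound (σ δ : ℝ) (hσ : 1 ≤ σ) (hδ1 : 1 ≤ δ)
    (hδσ : δ ≤ σ) :
    ∃ C > 0, ∀ j k β₁ β₂ β₃ γ₁ γ₂ γ₃ : ℕ, k ≤ j → γ₁ ≤ β₁ → γ₂ ≤ β₂ → γ₃ ≤ β₃ →
      (Nat.factorial (β₁ + β₂ + β₃ + j) : ℝ) /
          ((Nat.factorial (γ₁ + γ₂ + γ₃ + k) : ℝ) *
            (Nat.factorial (β₁ + β₂ + β₃ + j - (γ₁ + γ₂ + γ₃) - k) : ℝ)) *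
        (Nat.factorial (k + γ₁ + γ₃) : ℝ) ^ (σ - δ) *
        (Nat.factorial (k + (γ₁ + γ₂ + γ₃)) : ℝ) ^ δ *
        (Nat.factorial (j - k + (β₁ - γ₁) + (β₃ - γ₃) + 1) : ℝ) ^ (σ - δ) *
        (Nat.factorial (j - k + ((β₁ + β₂ + β₃) - (γ₁ + γ₂ + γ₃)) + 1) : ℝ) ^ δ ≤
      C * (Nat.factorial (j + β₁ + β₃ + 1) : ℝ) ^ (σ - δ) *
        (Nat.factorial (β₁ + β₂ + β₃ + j + 1) : ℝ) ^ δ := by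
  refine ⟨1, one_pos, ?_⟩
  intro j k β₁ β₂ β₃ γ₁ γ₂ γ₃ hkj hg1 hg2 hg3
  have e1 : k + (γ₁ + γ₂ + γ₃) = γ₁ + γ₂ + γ₃ + k := by omega
  have e2 : j - k + ((β₁ + β₂ + β₃) - (γ₁ + γ₂ + γ₃)) + 1
      = (β₁ + β₂ + β₃ + j) - (γ₁ + γ₂ + γ₃ + k) + 1 := by omega
  have e3 : β₁ + β₂ + β₃ + j - (γ₁ + γ₂ + γ₃) - k
      = (β₁ + β₂ + β₃ + j) - (γ₁ + γ₂ + γ₃ + k) := by omega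
  have e4 : j - k + (β₁ - γ₁) + (β₃ - γ₃) + 1
      = (j + β₁ + β₃) - (k + γ₁ + γ₃) + 1 := by omega
  rw [e1, e2, e3, e4]
  set B := β₁ + β₂ + β₃ + j with hB
  set G := γ₁ + γ₂ + γ₃ + k with hG
  set A := j + β₁ + β₃ with hA
  set a := k + γ₁ + γ₃ with ha
  have hGB : G ≤ B := by omega
  have haA : a ≤ A := by omega
  -- the division is the binomial coefficient
  have key : B.choose G * Nat.factorial G * Nat.factorial (B - G) = Nat.factorial B :=
    Nat.choose_mul_factorial_mul_factorial hGB
  have hD : (Nat.factorial B : ℝ) / ((Nat.factorial G : ℝ) * (Nat.factorial (B - G) : ℝ))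
      = (B.choose G : ℝ) := by
    rw [div_eq_iff (by positivity)]
    have : Nat.factorial B = B.choose G * (Nat.factorial G * Nat.factorial (B - G)) := by
      rw [← key]; ring
    exact_mod_cast this
  rw [hD]
  -- ℕ-level inequalities
  have hPR : Nat.factorial a * Nat.factorial (A - a + 1) ≤ Nat.factorial (A + 1) := by
    have := Nat.factorial_mul_factorial_dvd_factorial_add a (A - a + 1)
    have e : a + (A - a + 1) = A + 1 := by omega
    rw [e] at this
    exact Nat.le_of_dvd (Nat.factorial_pos _) this
  have hQS : Nat.factorial G * Nat.factorial (B - G + 1) ≤ Nat.factorial (B + 1) := by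
    have := Nat.factorial_mul_factorial_dvd_factorial_add G (B - G + 1)
    have e : G + (B - G + 1) = B + 1 := by omega
    rw [e] at this
    exact Nat.le_of_dvd (Nat.factorial_pos _) this
  have hCQS : B.choose G * (Nat.factorial G * Nat.factorial (B - G + 1))
      ≤ Nat.factorial (B + 1) := by
    have e : Nat.factorial (B - G + 1) = (B - G + 1) * Nat.factorial (B - G) :=
      Nat.factorial_succ _
    calc B.choose G * (Nat.factorial G * Nat.factorial (B - G + 1))
        = (B.choose G * Nat.factorial G * Nat.factorial (B - G)) * (B - G + 1) := by
          rw [e]; ring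
      _ = Nat.factorial B * (B - G + 1) := by rw [key]
      _ ≤ Nat.factorial B * (B + 1) := by
          exact Nat.mul_le_mul_left _ (by omega)
      _ = Nat.factorial (B + 1) := by rw [Nat.factorial_succ]; ring
  -- real versions
  set p := (Nat.factorial a : ℝ) with hp
  set q := (Nat.factorial G : ℝ) with hq
  set r := (Nat.factorial (A - a + 1) : ℝ) with hr
  set s := (Nat.factorial (B - G + 1) : ℝ) with hs
  set c := (B.choose G : ℝ) with hc
  set ta := (Nat.factorial (A + 1) : ℝ) with hta
  set tb := (Nat.factorial (B + 1) : ℝ) with htb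
  have hp0 : 0 < p := by rw [hp]; positivity
  have hq0 : 0 < q := by rw [hq]; positivity
  have hr0 : 0 < r := by rw [hr]; positivity
  have hs0 : 0 < s := by rw [hs]; positivity
  have hc0 : 0 < c := by rw [hc]; exact_mod_cast Nat.choose_pos hGB
  have hta0 : 0 < ta := by rw [hta]; positivity
  have htb0 : 0 < tb := by rw [htb]; positivity
  have hPR' : p * r ≤ ta := by rw [hp, hr, hta]; exact_mod_cast hPR
  have hQS' : q * s ≤ tb := by rw [hq, hs, htb]; exact_mod_cast hQS
  have hCQS' : c * (q * s) ≤ tb := by rw [hc, hq, hs, htb]; exact_mod_cast hCQS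
  have hσδ : (0:ℝ) ≤ σ - δ := by linarith
  have hδ1' : (0:ℝ) ≤ δ - 1 := by linarith
  have hqd : q ^ δ = q * q ^ (δ - 1) := by
    nth_rewrite 1 [show δ = 1 + (δ - 1) by ring]
    rw [Real.rpow_add hq0, Real.rpow_one]
  have hsd : s ^ δ = s * s ^ (δ - 1) := by
    nth_rewrite 1 [show δ = 1 + (δ - 1) by ring]
    rw [Real.rpow_add hs0, Real.rpow_one]
  have expand : c * p ^ (σ - δ) * q ^ δ * r ^ (σ - δ) * s ^ δ
      = (p * r) ^ (σ - δ) * ((c * (q * s)) * (q * s) ^ (δ - 1)) := by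
    rw [Real.mul_rpow hp0.le hr0.le, Real.mul_rpow hq0.le hs0.le, hqd, hsd]
    ring
  rw [expand, one_mul]
  have h1 : (p * r) ^ (σ - δ) ≤ ta ^ (σ - δ) :=
    Real.rpow_le_rpow (by positivity) hPR' hσδ
  have h2 : (q * s) ^ (δ - 1) ≤ tb ^ (δ - 1) :=
    Real.rpow_le_rpow (by positivity) hQS' hδ1'
  have h3 : (c * (q * s)) * (q * s) ^ (δ - 1) ≤ tb * tb ^ (δ - 1) := by
    apply mul_le_mul hCQS' h2 (by positivity) htb0.le
  have h4 : tb * tb ^ (δ - 1) = tb ^ δ := by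
    nth_rewrite 1 [← Real.rpow_one tb]
    rw [← Real.rpow_add htb0]
    ring_nf
  calc (p * r) ^ (σ - δ) * ((c * (q * s)) * (q * s) ^ (δ - 1))
      ≤ ta ^ (σ - δ) * (tb * tb ^ (δ - 1)) := by
        apply mul_le_mul h1 h3 (by positivity) (by positivity)
    _ = ta ^ (σ - δ) * tb ^ δ := by rw [h4]
end
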